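/- Let (X,d) be a metric space, let a_1,…,a_{n_a} (outlier points), c_1,…,c_{n_c} (clean points), and y_1,…,y_N be points of X with n_a, n_c, N ≥ 1, and set γ = n_a/(n_a+n_c). Let p_a, p_c be the uniform vectors on the outlier and clean points, let p_X be the uniform vector on all n_a+n_c points, and let q ∈ Δ^N be the uniform vector on y_1,…,y_N. Then for every ρ ≥ 0 and every β ∈ [0,1] satisfying (β−γ)² ≤ 2ργ(1−γ): W^rob_{ρ,0}(p_X, q) ≤ β·W(p_a, q) + (1−β)·W(p_c, q). (Proof idea: the mixture β·π_a* + (1−β)·π_c* of optimal couplings is a feasible coupling for the relaxed marginal β·p_a + (1−β)·p_c.) -/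

import Mathlib

open Finset

/-- Discrete optimal transport cost between weighted point configurations. -/
noncomputable def discreteW {X : Type*} [MetricSpace X] {M N : ℕ}
    (x : Fin M → X) (y : Fin N → X) (p : Fin M → ℝ) (q : Fin N → ℝ) : ℝ :=
  sInf { c : ℝ | ∃ π : Fin M → Fin N → ℝ,
    (∀ i j, 0 ≤ π i j) ∧ (∀ i, ∑ j, π i j = p i) ∧ (∀ j, ∑ i, π i j = q j) ∧
    c = ∑ i, ∑ j, π i j * dist (x i) (y j) }

/-- `p` is a probability vector. -/
def IsProbVec {M : ℕ} (p : Fin M → ℝ) : Prop := (∀ i, 0 ≤ p i) ∧ ∑ i, p i = 1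

/-- χ²-divergence between probability vectors, with generator f(t) = (t-1)²/2. -/
noncomputable def chiSqDiv {M : ℕ} (pt p : Fin M → ℝ) : ℝ :=
  ∑ i, p i * ((pt i / p i - 1) ^ 2 / 2)

/-- Robust optimal transport cost with marginal χ²-relaxation budgets ρ₁, ρ₂. -/
noncomputable def robustW {X : Type*} [MetricSpace X] {M N : ℕ}
    (x : Fin M → X) (y : Fin N → X) (p : Fin M → ℝ) (q : Fin N → ℝ) (ρ₁ ρ₂ : ℝ) : ℝ :=
  sInf { c : ℝ | ∃ pt qt, IsProbVec pt ∧ IsProbVec qt ∧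
    chiSqDiv pt p ≤ ρ₁ ∧ chiSqDiv qt q ≤ ρ₂ ∧ c = discreteW x y pt qt }

/-!
Mixing near-optimal couplings `π_a` of `(p_a, q)` and `π_c` of `(p_c, q)` with weights `β` and
`1 - β` gives a coupling of `q` with the reweighted marginal that puts mass `β / n_a` on each
outlier and `(1 - β) / n_c` on each clean point, at cost `β W(p_a, q) + (1 - β) W(p_c, q)`.
A direct computation shows that this marginal is at χ²-divergence `(β - γ)² / (2γ(1 - γ)) ≤ ρ`
from the uniform vector, so it is admissible in the robust problem.
-/

structure IsCoupling {M N : ℕ} (p : Fin M → ℝ) (q : Fin N → ℝ) (π : Fin M → Fin N → ℝ) :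
    Prop where
  nonneg : ∀ i j, 0 ≤ π i j
  sum_row : ∀ i, ∑ j, π i j = p i
  sum_col : ∀ j, ∑ i, π i j = q j

def transportCost {X : Type*} [MetricSpace X] {M N : ℕ}
    (x : Fin M → X) (y : Fin N → X) (π : Fin M → Fin N → ℝ) : ℝ :=
  ∑ i, ∑ j, π i j * dist (x i) (y j)

section Coupling

variable {M M' N : ℕ} {p : Fin M → ℝ} {p' : Fin M' → ℝ} {q q' : Fin N → ℝ}
  {π : Fin M → Fin N → ℝ} {σ : Fin M' → Fin N → ℝ}

theorem IsCoupling.smul (h : IsCoupling p q π) {t : ℝ} (ht : 0 ≤ t) :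
    IsCoupling (t • p) (t • q) (t • π) where
  nonneg i j := mul_nonneg ht (h.nonneg i j)
  sum_row i := by simp only [Pi.smul_apply, smul_eq_mul, ← mul_sum, h.sum_row]
  sum_col j := by simp only [Pi.smul_apply, smul_eq_mul, ← mul_sum, h.sum_col]

theorem IsCoupling.append (h : IsCoupling p q π) (h' : IsCoupling p' q' σ) :
    IsCoupling (Fin.append p p') (q + q') (Fin.append π σ) where
  nonneg := Fin.addCases (by simpa using h.nonneg) (by simpa using h'.nonneg)
  sum_row := Fin.addCases (by simpa using h.sum_row) (by simpa using h'.sum_row)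
  sum_col j := by simp [Fin.sum_univ_add, h.sum_col, h'.sum_col]

theorem isCoupling_mul (hp : IsProbVec p) (hq : IsProbVec q) :
    IsCoupling p q (fun i j => p i * q j) where
  nonneg i j := mul_nonneg (hp.1 i) (hq.1 j)
  sum_row i := by rw [← mul_sum, hq.2, mul_one]
  sum_col j := by rw [← sum_mul, hp.2, one_mul]

end Coupling

section TransportCost

variable {X : Type*} [MetricSpace X] {M M' N : ℕ} (x : Fin M → X) (x' : Fin M' → X)
  (y : Fin N → X) {p : Fin M → ℝ} {q : Fin N → ℝ} {π : Fin M → Fin N → ℝ}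

theorem transportCost_nonneg (hπ : ∀ i j, 0 ≤ π i j) : 0 ≤ transportCost x y π :=
  sum_nonneg fun i _ => sum_nonneg fun j _ => mul_nonneg (hπ i j) dist_nonneg

theorem transportCost_smul (t : ℝ) (π : Fin M → Fin N → ℝ) :
    transportCost x y (t • π) = t * transportCost x y π := by
  simp only [transportCost, mul_sum, Pi.smul_apply, smul_eq_mul, mul_assoc]

theorem transportCost_append (π : Fin M → Fin N → ℝ) (σ : Fin M' → Fin N → ℝ) :
    transportCost (Fin.append x x') y (Fin.append π σ) =
      transportCost x y π + transportCost x' y σ := by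
  simp [transportCost, Fin.sum_univ_add]

theorem discreteW_eq_sInf_image :
    discreteW x y p q = sInf (transportCost x y '' {π | IsCoupling p q π}) := by
  rw [discreteW]
  congr 1
  ext c
  exact ⟨fun ⟨π, h0, hr, hc, he⟩ => ⟨π, ⟨h0, hr, hc⟩, he.symm⟩,
    fun ⟨π, ⟨h0, hr, hc⟩, he⟩ => ⟨π, h0, hr, hc, he.symm⟩⟩

theorem discreteW_nonneg : 0 ≤ discreteW x y p q := by
  rw [discreteW_eq_sInf_image]
  exact Real.sInf_nonneg <| Set.forall_mem_image.2 fun π hπ => transportCost_nonneg x y hπ.nonneg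

theorem discreteW_le_transportCost (h : IsCoupling p q π) :
    discreteW x y p q ≤ transportCost x y π := by
  rw [discreteW_eq_sInf_image]
  exact csInf_le ⟨0, Set.forall_mem_image.2 fun σ hσ => transportCost_nonneg x y hσ.nonneg⟩
    (Set.mem_image_of_mem _ h)

theorem exists_isCoupling_transportCost_lt (hp : IsProbVec p) (hq : IsProbVec q)
    {ε : ℝ} (hε : 0 < ε) :
    ∃ π, IsCoupling p q π ∧ transportCost x y π < discreteW x y p q + ε := by
  rw [discreteW_eq_sInf_image]
  obtain ⟨_, ⟨π, hπ, rfl⟩, hlt⟩ :=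
    Real.lt_sInf_add_pos ((Set.nonempty_of_mem (isCoupling_mul hp hq)).image _) hε
  exact ⟨π, hπ, hlt⟩

end TransportCost

theorem IsProbVec.mixture {M M' : ℕ} {p : Fin M → ℝ} {p' : Fin M' → ℝ} (hp : IsProbVec p)
    (hp' : IsProbVec p') {β : ℝ} (hβ0 : 0 ≤ β) (hβ1 : β ≤ 1) :
    IsProbVec (Fin.append (β • p) ((1 - β) • p')) := by
  refine ⟨fun i => ?_, ?_⟩
  · refine Fin.addCases (fun i => ?_) (fun i => ?_) i
    · simpa using mul_nonneg hβ0 (hp.1 i)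
    · simpa using mul_nonneg (sub_nonneg.2 hβ1) (hp'.1 i)
  · simp only [Fin.sum_univ_add, Fin.append_left, Fin.append_right, Pi.smul_apply, smul_eq_mul,
      ← mul_sum, hp.2, hp'.2]
    ring

theorem isProbVec_uniform {n : ℕ} (hn : 1 ≤ n) : IsProbVec (fun _ : Fin n => 1 / (n : ℝ)) := by
  refine ⟨fun _ => by positivity, ?_⟩
  simp [mul_inv_cancel₀ (by positivity : (n : ℝ) ≠ 0)]

theorem chiSqDiv_self {M : ℕ} (p : Fin M → ℝ) : chiSqDiv p p = 0 :=
  sum_eq_zero fun i _ => by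
    rcases eq_or_ne (p i) 0 with h | h <;> simp [h]

theorem robustW_le_discreteW {X : Type*} [MetricSpace X] {M N : ℕ}
    (x : Fin M → X) (y : Fin N → X) {p pt : Fin M → ℝ} {q qt : Fin N → ℝ} {ρ₁ ρ₂ : ℝ}
    (hpt : IsProbVec pt) (hqt : IsProbVec qt) (hp : chiSqDiv pt p ≤ ρ₁)
    (hq : chiSqDiv qt q ≤ ρ₂) :
    robustW x y p q ρ₁ ρ₂ ≤ discreteW x y pt qt :=
  csInf_le ⟨0, fun _ ⟨_, _, _, _, _, _, hc⟩ => hc ▸ discreteW_nonneg x y⟩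
    ⟨pt, qt, hpt, hqt, hp, hq, rfl⟩

theorem discreteW_append_le_mixture {X : Type*} [MetricSpace X] {M M' N : ℕ}
    (x : Fin M → X) (x' : Fin M' → X) (y : Fin N → X) {p : Fin M → ℝ} {p' : Fin M' → ℝ}
    {q : Fin N → ℝ} (hp : IsProbVec p) (hp' : IsProbVec p') (hq : IsProbVec q)
    {β : ℝ} (hβ0 : 0 ≤ β) (hβ1 : β ≤ 1) :
    discreteW (Fin.append x x') y (Fin.append (β • p) ((1 - β) • p')) q ≤
      β * discreteW x y p q + (1 - β) * discreteW x' y p' q := by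
  refine le_of_forall_pos_le_add fun ε hε => ?_
  obtain ⟨π, hπ, hπε⟩ := exists_isCoupling_transportCost_lt x y hp hq hε
  obtain ⟨σ, hσ, hσε⟩ := exists_isCoupling_transportCost_lt x' y hp' hq hε
  have hmix : IsCoupling (Fin.append (β • p) ((1 - β) • p')) q
      (Fin.append (β • π) ((1 - β) • σ)) := by
    simpa [Convex.combo_self (add_sub_cancel β 1)] using
      (hπ.smul hβ0).append (hσ.smul (sub_nonneg.2 hβ1))
  calc discreteW (Fin.append x x') y (Fin.append (β • p) ((1 - β) • p')) q
      ≤ β * transportCost x y π + (1 - β) * transportCost x' y σ := by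
        simpa [transportCost_append, transportCost_smul] using
          discreteW_le_transportCost (Fin.append x x') y hmix
    _ ≤ β * (discreteW x y p q + ε) + (1 - β) * (discreteW x' y p' q + ε) := by
        have : 0 ≤ 1 - β := sub_nonneg.2 hβ1
        gcongr
    _ = β * discreteW x y p q + (1 - β) * discreteW x' y p' q + ε := by ring

theorem chiSqDiv_mixture_uniform {na nc : ℕ} (hna : 1 ≤ na) (hnc : 1 ≤ nc) (β : ℝ) :
    chiSqDiv (Fin.append (β • fun _ : Fin na => 1 / (na : ℝ))
        ((1 - β) • fun _ : Fin nc => 1 / (nc : ℝ))) (fun _ => 1 / ((na : ℝ) + nc)) =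
      (β - na / (na + nc)) ^ 2 / (2 * (na / (na + nc)) * (1 - na / (na + nc))) := by
  have hna' : (na : ℝ) ≠ 0 := by positivity
  have hnc' : (nc : ℝ) ≠ 0 := by positivity
  have hs : (na : ℝ) + nc ≠ 0 := by positivity
  simp only [chiSqDiv, Fin.sum_univ_add, Fin.append_left, Fin.append_right, Pi.smul_apply,
    smul_eq_mul, sum_const, card_univ, Fintype.card_fin, nsmul_eq_mul]
  rw [one_sub_div hs, add_sub_cancel_left]
  field_simp
  ring

theorem robustW_mixture_bound_general {X : Type*} [MetricSpace X] {na nc N : ℕ}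
    (hna : 1 ≤ na) (hnc : 1 ≤ nc) (hN : 1 ≤ N)
    (a : Fin na → X) (c : Fin nc → X) (y : Fin N → X)
    (ρ : ℝ)
    (γ : ℝ) (hγ : γ = (na : ℝ) / ((na : ℝ) + nc))
    (β : ℝ) (hβ0 : 0 ≤ β) (hβ1 : β ≤ 1)
    (hβfeas : (β - γ) ^ 2 ≤ 2 * ρ * γ * (1 - γ)) :
    robustW (Fin.append a c) y (fun _ => 1 / ((na : ℝ) + nc)) (fun _ => 1 / (N : ℝ)) ρ 0
      ≤ β * discreteW a y (fun _ => 1 / (na : ℝ)) (fun _ => 1 / (N : ℝ))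
        + (1 - β) * discreteW c y (fun _ => 1 / (nc : ℝ)) (fun _ => 1 / (N : ℝ)) := by
  have hγ0 : 0 < γ := by rw [hγ]; positivity
  have hγ1 : γ < 1 := by
    rw [hγ, div_lt_one (by positivity), lt_add_iff_pos_right]
    positivity
  have hchi : chiSqDiv (Fin.append (β • fun _ : Fin na => 1 / (na : ℝ))
      ((1 - β) • fun _ : Fin nc => 1 / (nc : ℝ))) (fun _ => 1 / ((na : ℝ) + nc)) ≤ ρ := by
    rw [chiSqDiv_mixture_uniform hna hnc, ← hγ,
      div_le_iff₀ (mul_pos (mul_pos two_pos hγ0) (sub_pos.2 hγ1))]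
    linarith
  have ha := isProbVec_uniform hna
  have hc := isProbVec_uniform hnc
  have hq := isProbVec_uniform hN
  calc _ ≤ discreteW (Fin.append a c) y _ _ :=
        robustW_le_discreteW _ _ (ha.mixture hc hβ0 hβ1) hq hchi (chiSqDiv_self _).le
    _ ≤ _ := discreteW_append_le_mixture a c y ha hc hq hβ0 hβ1

theorem robustW_mixture_bound {X : Type*} [MetricSpace X] {na nc N : ℕ}
    (hna : 1 ≤ na) (hnc : 1 ≤ nc) (hN : 1 ≤ N)
    (a : Fin na → X) (c : Fin nc → X) (y : Fin N → X)
    (ρ : ℝ) (hρ : 0 ≤ ρ)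
    (γ : ℝ) (hγ : γ = (na : ℝ) / ((na : ℝ) + nc))
    (β : ℝ) (hβ0 : 0 ≤ β) (hβ1 : β ≤ 1)
    (hβfeas : (β - γ) ^ 2 ≤ 2 * ρ * γ * (1 - γ)) :
    robustW (Fin.append a c) y (fun _ => 1 / ((na : ℝ) + nc)) (fun _ => 1 / (N : ℝ)) ρ 0
      ≤ β * discreteW a y (fun _ => 1 / (na : ℝ)) (fun _ => 1 / (N : ℝ))
        + (1 - β) * discreteW c y (fun _ => 1 / (nc : ℝ)) (fun _ => 1 / (N : ℝ)) :=
  robustW_mixture_bound_general hna hnc hN a c y ρ γ hγ β hβ0 hβ1 hβfeas
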